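/- arXiv:2008.12358 — 2 statements merged into one kernel-verified Lean document; each statement's English description precedes it below -/
import Mathlib

section
/- Let (X,d) be a complete separable metric space and m a nonnegative Borel measure on X, finite on bounded sets, with m(X) = ∞. Then for every q ∈ (1,∞) one has λ_{0,q}(X) ≥ (h(X)/q)^q. In particular, taking q = 2 yields Cheeger's inequality λ_{0,2}(X) ≥ h(X)²/4. -/
open MeasureTheory Filter Topology ENNReal

/-- The slope (pointwise Lipschitz constant) of `f` at `x`, with the convention that it is `0`
at isolated points. -/
noncomputable def lipSlope {X : Type*} [MetricSpace X] (f : X → ℝ) (x : X) : ℝ :=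
  Filter.limsup (fun y => |f y - f x| / dist y x) (𝓝[≠] x)

/-- Lipschitz functions with bounded support. -/
def LipBS {X : Type*} [MetricSpace X] (f : X → ℝ) : Prop :=
  (∃ K : NNReal, LipschitzWith K f) ∧ Bornology.IsBounded (Function.support f)

/-- Functions which are Lipschitz on bounded sets. -/
def LipLoc {X : Type*} [MetricSpace X] (f : X → ℝ) : Prop :=
  ∀ s : Set X, Bornology.IsBounded s → ∃ K : NNReal, LipschitzOnWith K f s

/-- The perimeter of a Borel set `A`. -/
noncomputable def perimeter {X : Type*} [MetricSpace X] [MeasurableSpace X]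
    (m : Measure X) (A : Set X) : ℝ≥0∞ :=
  sInf { p : ℝ≥0∞ | ∃ f : ℕ → X → ℝ, (∀ n, LipLoc (f n)) ∧
    Tendsto (fun n => ∫⁻ x, ENNReal.ofReal |f n x - A.indicator (fun _ => (1:ℝ)) x| ∂m)
      atTop (𝓝 0) ∧
    p = Filter.liminf (fun n => ∫⁻ x, ENNReal.ofReal (lipSlope (f n) x) ∂m) atTop }

/-- The Cheeger constant (infinite measure case):
`h(X) = inf { Per(A)/m(A) : A Borel, 0 < m(A) < ∞ }`. -/
noncomputable def cheegerInf {X : Type*} [MetricSpace X] [MeasurableSpace X]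
    (m : Measure X) : ℝ≥0∞ :=
  sInf { h : ℝ≥0∞ | ∃ A : Set X, MeasurableSet A ∧ 0 < m A ∧ m A < ⊤ ∧
    h = perimeter m A / m A }

/-- The bottom of the `q`-spectrum `λ_{0,q}` (infinite measure case):
the infimum of `(∫ lip(f)^q dm)/(∫ |f|^q dm)` over nonzero `f ∈ Lip_bs(X)`. -/
noncomputable def lambdaZeroP {X : Type*} [MetricSpace X] [MeasurableSpace X]
    (m : Measure X) (q : ℝ) : ℝ≥0∞ :=
  sInf { l : ℝ≥0∞ | ∃ f : X → ℝ, LipBS f ∧ ¬ (f =ᵐ[m] 0) ∧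
    l = (∫⁻ x, ENNReal.ofReal ((lipSlope f x) ^ q) ∂m) /
        (∫⁻ x, ENNReal.ofReal (|f x| ^ q) ∂m) }

/-!
Put `g = |f|^q` for `f ∈ Lip_bs(X)`. The heart of the proof is the coarea inequality
`h(X) ∫ g ≤ ∫ lip g` for nonnegative Lipschitz `g` whose support has finite measure. By the
layer-cake formula `∫ g = ∫₀^∞ m{g > t} dt`, and `h(X) m{g > t} ≤ Per{g > t}`, where the perimeter
is tested on the ramps `φₙ ∘ g`, `φₙ` rising linearly from `0` to `1` on `[t, t + 1/n]`, with
`lip (φₙ ∘ g) ≤ n · 1{t ≤ g ≤ t + 1/n} · lip g`. Integrating this bound in `t` returns exactly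
`∫ lip g` (Fatou and Tonelli). Then the chain rule `lip g ≤ q |f|^{q-1} lip f` and Hölder's
inequality with exponents `q/(q-1)` and `q` give
`h(X) ∫ |f|^q ≤ q (∫ |f|^q)^{1-1/q} (∫ lip(f)^q)^{1/q}`, which rearranges to the claim.
-/

open Set Metric NNReal

def ramp (c t s : ℝ) : ℝ := min 1 (max 0 (c * (s - t)))

section Ramp

variable {c t s : ℝ}

theorem ramp_of_le (hc : 0 ≤ c) (hs : s ≤ t) : ramp c t s = 0 := by
  rw [ramp, max_eq_left (mul_nonpos_of_nonneg_of_nonpos hc (sub_nonpos.2 hs)),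
    min_eq_right zero_le_one]

theorem ramp_of_ge (hc : 0 < c) (hs : t + c⁻¹ ≤ s) : ramp c t s = 1 := by
  have h : 1 ≤ c * (s - t) := by rw [← inv_mul_le_iff₀ hc]; linarith
  rw [ramp, max_eq_right (zero_le_one.trans h), min_eq_left h]

theorem ramp_mem_Icc : ramp c t s ∈ Icc 0 1 :=
  ⟨le_min zero_le_one (le_max_left _ _), min_le_left _ _⟩

theorem abs_ramp_sub_ramp_le (hc : 0 ≤ c) (s s' : ℝ) :
    |ramp c t s - ramp c t s'| ≤ c * |s - s'| := by
  calc |ramp c t s - ramp c t s'| ≤ |max 0 (c * (s - t)) - max 0 (c * (s' - t))| := by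
        have := abs_min_sub_min_le_max 1 (max 0 (c * (s - t))) 1 (max 0 (c * (s' - t)))
        rwa [sub_self, abs_zero, max_eq_right (abs_nonneg (max 0 (c * (s - t)) - _))] at this
    _ ≤ |c * (s - t) - c * (s' - t)| := by
        simpa only [max_comm _ (0 : ℝ)] using abs_max_sub_max_le_abs (c * (s - t)) (c * (s' - t)) 0
    _ = c * |s - s'| := by rw [← mul_sub, sub_sub_sub_cancel_right, abs_mul, abs_of_nonneg hc]

theorem lipschitzWith_ramp (hc : 0 ≤ c) (t : ℝ) : LipschitzWith ⟨c, hc⟩ (ramp c t) :=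
  .of_dist_le_mul fun s s' => by
    rw [Real.dist_eq, Real.dist_eq]; exact abs_ramp_sub_ramp_le hc s s'

theorem ramp_eventuallyEq (hc : 0 < c) (hs : s ∉ Icc t (t + c⁻¹)) :
    ramp c t =ᶠ[𝓝 s] fun _ => ramp c t s := by
  rcases lt_or_ge s t with hst | hts
  · filter_upwards [eventually_lt_nhds hst] with s' hs'
    rw [ramp_of_le hc.le hs'.le, ramp_of_le hc.le hst.le]
  · have hst : t + c⁻¹ < s := lt_of_not_ge fun h => hs ⟨hts, h⟩
    filter_upwards [eventually_gt_nhds hst] with s' hs'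
    rw [ramp_of_ge hc hs'.le, ramp_of_ge hc hst.le]

theorem ofReal_abs_ramp_sub_indicator_le (hc : 0 < c) :
    ENNReal.ofReal |ramp c t s - (Ioi t).indicator (fun _ => 1) s| ≤
      (Ioo t (t + c⁻¹)).indicator 1 s := by
  by_cases hts : t < s
  · by_cases hs : s < t + c⁻¹
    · rw [indicator_of_mem (mem_Ioi.2 hts), indicator_of_mem (mem_Ioo.2 ⟨hts, hs⟩), Pi.one_apply,
        ENNReal.ofReal_le_one, abs_sub_le_iff]
      obtain ⟨h0, h1⟩ := ramp_mem_Icc (c := c) (t := t) (s := s)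
      constructor <;> linarith
    · simp [ramp_of_ge hc (not_lt.1 hs), indicator_of_mem (mem_Ioi.2 hts)]
  · simp [ramp_of_le hc.le (not_lt.1 hts), indicator_of_notMem (notMem_Ioi.2 (not_lt.1 hts))]
end Ramp

theorem lipschitzOnWith_rpow_Icc {q : ℝ} (hq : 1 ≤ q) (M : ℝ) :
    LipschitzOnWith (q * M ^ (q - 1)).toNNReal (fun t : ℝ => t ^ q) (Icc 0 M) := by
  refine (convex_Icc 0 M).lipschitzOnWith_of_nnnorm_hasDerivWithin_le
    (fun t _ => (Real.hasDerivAt_rpow_const (Or.inr hq)).hasDerivWithinAt) fun t ht => ?_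
  rw [← NNReal.coe_le_coe, coe_nnnorm, Real.norm_of_nonneg (by have := ht.1; positivity),
    Real.coe_toNNReal _ (by have := ht.1.trans ht.2; positivity)]
  gcongr
  · exact ht.1
  · exact ht.2

theorem ENNReal.div_rpow_le_div_of_mul_le {h c N D : ℝ≥0∞} {q : ℝ} (hq : 0 < q) (hD0 : D ≠ 0)
    (hD : D ≠ ⊤) (hle : h * D ≤ c * (D ^ (1 - 1 / q) * N ^ (1 / q))) : (h / c) ^ q ≤ N / D := by
  have hsplit : D = D ^ (1 / q) * D ^ (1 - 1 / q) := by
    rw [← ENNReal.rpow_add _ _ hD0 hD, add_sub_cancel, ENNReal.rpow_one]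
  have hroot : h * D ^ (1 / q) ≤ c * N ^ (1 / q) := by
    rw [← ENNReal.mul_le_mul_iff_left (ENNReal.rpow_pos (pos_iff_ne_zero.2 hD0) hD).ne'
      (ENNReal.rpow_ne_top_of_ne_zero hD0 hD)]
    calc h * D ^ (1 / q) * D ^ (1 - 1 / q) = h * D := by rw [mul_assoc, ← hsplit]
      _ ≤ c * (D ^ (1 - 1 / q) * N ^ (1 / q)) := hle
      _ = c * N ^ (1 / q) * D ^ (1 - 1 / q) := by ring
  have hdiv : h / c * D ^ (1 / q) ≤ N ^ (1 / q) := by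
    rw [div_eq_mul_inv, mul_right_comm, ← div_eq_mul_inv]
    exact ENNReal.div_le_of_le_mul (by rwa [mul_comm _ c])
  rw [ENNReal.le_div_iff_mul_le (Or.inl hD0) (Or.inl hD)]
  simpa [ENNReal.mul_rpow_of_nonneg _ _ hq.le, ← ENNReal.rpow_mul, hq.ne'] using
    ENNReal.rpow_le_rpow hdiv hq.le

-- Unlike `lipSlope`, this `limsup` needs no boundedness side conditions.
noncomputable def eLipSlope {X : Type*} [MetricSpace X] (f : X → ℝ) (x : X) : ℝ≥0∞ :=
  limsup (fun y => ENNReal.ofReal (|f y - f x| / dist y x)) (𝓝[≠] x)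

section Slope

variable {X : Type*} [MetricSpace X] {f g : X → ℝ} {x : X} {K : ℝ≥0} {q : ℝ}

theorem eLipSlope_le_mul {C : ℝ} (h : ∀ᶠ y in 𝓝[≠] x, |g y - g x| ≤ C * |f y - f x|) :
    eLipSlope g x ≤ ENNReal.ofReal C * eLipSlope f x := by
  rw [eLipSlope, eLipSlope, ← ENNReal.limsup_const_mul_of_ne_top ofReal_ne_top]
  refine limsup_le_limsup (h.mono fun y hy => ?_)
  dsimp only
  rw [← ENNReal.ofReal_mul' (div_nonneg (abs_nonneg _) dist_nonneg), ← mul_div_assoc]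
  gcongr

theorem eLipSlope_comp_le {φ : ℝ → ℝ} {L : ℝ} (hg : ContinuousAt g x)
    (hφ : ∀ᶠ s in 𝓝 (g x), |φ s - φ (g x)| ≤ L * |s - g x|) :
    eLipSlope (φ ∘ g) x ≤ ENNReal.ofReal L * eLipSlope g x :=
  eLipSlope_le_mul (nhdsWithin_le_nhds (hg.eventually hφ))

theorem eLipSlope_le_of_lipschitzWith (hf : LipschitzWith K f) (x : X) :
    eLipSlope f x ≤ K := by
  refine limsup_le_of_le (by isBoundedDefault) (Eventually.of_forall fun y => ?_)
  rw [← ENNReal.ofReal_coe_nnreal]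
  refine ENNReal.ofReal_le_ofReal (div_le_of_le_mul₀ dist_nonneg K.coe_nonneg ?_)
  simpa [Real.dist_eq] using hf.dist_le_mul y x

theorem eLipSlope_comp_le_of_hasDerivAt {φ : ℝ → ℝ} {φ' : ℝ} (hφ : HasDerivAt φ φ' (g x))
    (hg : ContinuousAt g x) (hfin : eLipSlope g x ≠ ⊤) :
    eLipSlope (φ ∘ g) x ≤ ENNReal.ofReal |φ'| * eLipSlope g x := by
  have hε : ∀ ε > 0, eLipSlope (φ ∘ g) x ≤ ENNReal.ofReal (|φ'| + ε) * eLipSlope g x := by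
    intro ε hε
    refine eLipSlope_comp_le hg ((hφ.isLittleO.def hε).mono fun s hs => ?_)
    rw [Real.norm_eq_abs, Real.norm_eq_abs, smul_eq_mul] at hs
    have := abs_sub_abs_le_abs_sub (φ s - φ (g x)) ((s - g x) * φ')
    rw [abs_mul] at this
    linarith
  have hlim : Tendsto (fun ε => ENNReal.ofReal (|φ'| + ε) * eLipSlope g x) (𝓝[>] 0)
      (𝓝 (ENNReal.ofReal |φ'| * eLipSlope g x)) := by
    refine ENNReal.Tendsto.mul_const ?_ (Or.inr hfin)
    simpa [Function.comp_def] using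
      ((ENNReal.continuous_ofReal.comp (continuous_const_add |φ'|)).tendsto 0).mono_left
        nhdsWithin_le_nhds
  exact ge_of_tendsto hlim (eventually_nhdsWithin_of_forall hε)

theorem lipSlope_eq_zero_of_nhdsNE_eq_bot (h : 𝓝[≠] x = ⊥) : lipSlope f x = 0 := by
  simp [lipSlope, limsup_eq, h]

theorem LipschitzWith.isBoundedUnder_le_div_dist (hf : LipschitzWith K f) (x : X) :
    (𝓝[≠] x).IsBoundedUnder (· ≤ ·) fun y => |f y - f x| / dist y x :=
  isBoundedUnder_of ⟨K, fun y => div_le_of_le_mul₀ dist_nonneg K.coe_nonneg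
    (by simpa [Real.dist_eq] using hf.dist_le_mul y x)⟩

theorem lipSlope_nonneg (hf : LipschitzWith K f) (x : X) : 0 ≤ lipSlope f x := by
  rcases eq_or_neBot (𝓝[≠] x) with h | h
  · rw [lipSlope_eq_zero_of_nhdsNE_eq_bot h]
  · exact le_limsup_of_frequently_le
      (Frequently.of_forall fun y => div_nonneg (abs_nonneg _) dist_nonneg)
      (hf.isBoundedUnder_le_div_dist x)

theorem ofReal_lipSlope (hf : LipschitzWith K f) (x : X) :
    ENNReal.ofReal (lipSlope f x) = eLipSlope f x := by
  rcases eq_or_neBot (𝓝[≠] x) with h | h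
  · rw [lipSlope_eq_zero_of_nhdsNE_eq_bot h, eLipSlope, h, limsup_bot, ENNReal.ofReal_zero,
      ENNReal.bot_eq_zero]
  · exact ENNReal.ofReal_mono.map_limsup_of_continuousAt _ ENNReal.continuous_ofReal.continuousAt
      (hf.isBoundedUnder_le_div_dist x)
      (isBoundedUnder_of ⟨0, fun y => div_nonneg (abs_nonneg _) dist_nonneg⟩).isCoboundedUnder_le

theorem eLipSlope_eq_iInf_iSup (f : X → ℝ) (x : X) :
    eLipSlope f x = ⨅ n : ℕ, ⨆ y ∈ ball x (1 / (n + 1)) ∩ {x}ᶜ,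
      ENNReal.ofReal (|f y - f x| / dist y x) := by
  simp [eLipSlope, (nhdsWithin_hasBasis nhds_basis_ball_inv_nat_succ _).limsup_eq_iInf_iSup]

theorem lowerSemicontinuous_iSup_ball_div_dist (hf : Continuous f) (r : ℝ) :
    LowerSemicontinuous fun x => ⨆ y ∈ ball x r ∩ {x}ᶜ,
      ENNReal.ofReal (|f y - f x| / dist y x) := by
  intro x a ha
  obtain ⟨y, ⟨hyr, hyx⟩, hay⟩ := lt_biSup_iff.1 ha
  have hmem : ∀ᶠ x' in 𝓝 x, y ∈ ball x' r ∩ {x'}ᶜ :=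
    (((continuous_const.dist continuous_id).tendsto x).eventually (eventually_lt_nhds hyr)).and
      ((eventually_ne_nhds (Ne.symm hyx)).mono fun _ => Ne.symm)
  have hcont : ContinuousAt (fun x' => ENNReal.ofReal (|f y - f x'| / dist y x')) x :=
    ENNReal.continuous_ofReal.continuousAt.comp
      (((continuousAt_const.sub hf.continuousAt).abs).div
        (continuousAt_const.dist continuousAt_id) (dist_ne_zero.2 hyx))
  filter_upwards [hmem, hcont.eventually (lt_mem_nhds hay)] with x' hx' hax'
  exact hax'.trans_le (le_biSup (fun y => ENNReal.ofReal (|f y - f x'| / dist y x')) hx')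

theorem measurable_eLipSlope [MeasurableSpace X] [OpensMeasurableSpace X] (hf : Continuous f) :
    Measurable (eLipSlope f) := by
  rw [funext (eLipSlope_eq_iInf_iSup f)]
  exact .iInf fun n => (lowerSemicontinuous_iSup_ball_div_dist hf _).measurable

theorem LipschitzWith.lipLoc (hf : LipschitzWith K f) : LipLoc f :=
  fun _ _ => ⟨K, hf.lipschitzOnWith⟩

theorem LipschitzWith.exists_abs_le_of_isBounded_support (hf : LipschitzWith K f)
    (hsupp : Bornology.IsBounded (Function.support f)) : ∃ M, ∀ x, |f x| ≤ M := by
  obtain ⟨C, hC⟩ := (hf.isBounded_image hsupp).exists_norm_le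
  refine ⟨max C 0, fun x => ?_⟩
  by_cases hx : f x = 0
  · simp [hx]
  · exact (hC _ (mem_image_of_mem f hx)).trans (le_max_left _ _)

theorem LipschitzWith.exists_lipschitzWith_abs_rpow (hf : LipschitzWith K f) {M : ℝ}
    (hM : ∀ x, |f x| ≤ M) (hq : 1 ≤ q) : ∃ K', LipschitzWith K' fun x => |f x| ^ q :=
  ⟨_, lipschitzOnWith_univ.1 <| (lipschitzOnWith_rpow_Icc hq M).comp
    (lipschitzOnWith_univ.2 (lipschitzWith_one_norm.comp hf)) fun x _ => ⟨abs_nonneg _, hM x⟩⟩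

theorem eLipSlope_abs_rpow_le (hf : LipschitzWith K f) (hq : 1 ≤ q) (x : X) :
    eLipSlope (fun y => |f y| ^ q) x ≤
      ENNReal.ofReal q * ENNReal.ofReal |f x| ^ (q - 1) * eLipSlope f x := by
  have habs : eLipSlope (fun y => |f y|) x ≤ eLipSlope f x := by
    simpa using eLipSlope_le_mul (C := 1)
      (Eventually.of_forall fun y => by simpa using abs_abs_sub_abs_le_abs_sub (f y) (f x))
  have hfin : eLipSlope (fun y => |f y|) x ≠ ⊤ :=
    ne_top_of_le_ne_top coe_ne_top (habs.trans (eLipSlope_le_of_lipschitzWith hf x))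
  calc eLipSlope (fun y => |f y| ^ q) x
      ≤ ENNReal.ofReal |q * |f x| ^ (q - 1)| * eLipSlope (fun y => |f y|) x :=
        eLipSlope_comp_le_of_hasDerivAt (φ := fun t => t ^ q)
          (Real.hasDerivAt_rpow_const (Or.inr hq)) hf.continuous.abs.continuousAt hfin
    _ ≤ ENNReal.ofReal q * ENNReal.ofReal |f x| ^ (q - 1) * eLipSlope f x := by
        rw [abs_of_nonneg (by positivity), ENNReal.ofReal_mul (by linarith),
          ENNReal.ofReal_rpow_of_nonneg (abs_nonneg _) (by linarith)]
        gcongr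

theorem eLipSlope_ramp_comp_le {c t : ℝ} (hc : 0 < c) (hg : Continuous g) (x : X) :
    eLipSlope (ramp c t ∘ g) x ≤
      (g ⁻¹' Icc t (t + c⁻¹)).indicator (fun y => ENNReal.ofReal c * eLipSlope g y) x := by
  by_cases hx : x ∈ g ⁻¹' Icc t (t + c⁻¹)
  · rw [indicator_of_mem hx]
    exact eLipSlope_comp_le hg.continuousAt
      (Eventually.of_forall fun s => abs_ramp_sub_ramp_le hc.le s (g x))
  · rw [indicator_of_notMem hx]
    simpa using eLipSlope_comp_le (L := 0) hg.continuousAt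
      ((ramp_eventuallyEq hc hx).mono fun s hs => by simp [hs])

end Slope

section Lebesgue

variable {X : Type*} [MeasurableSpace X] {m : Measure X} {f g : X → ℝ} {t q : ℝ}

theorem tendsto_measure_preimage_Ioo (hg : Measurable g) (hfin : m {x | t < g x} ≠ ⊤) :
    Tendsto (fun r => m (g ⁻¹' Ioo t r)) (𝓝[>] t) (𝓝 0) := by
  have hempty : ⋂ r > t, g ⁻¹' Ioo t r = ∅ := by
    refine eq_empty_of_forall_notMem fun x hx => ?_
    rw [mem_iInter₂] at hx
    exact lt_irrefl _ (hx (g x) (hx (t + 1) (by linarith)).1).2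
  have := tendsto_measure_biInter_gt (μ := m)
    (fun r _ => (hg measurableSet_Ioo).nullMeasurableSet)
    (fun i j _ hij => preimage_mono (Ioo_subset_Ioo_right hij))
    ⟨t + 1, by linarith, ne_top_of_le_ne_top hfin (measure_mono fun x hx => hx.1)⟩
  rwa [hempty, measure_empty] at this

theorem tendsto_lintegral_ramp_sub_indicator (hg : Measurable g) (hfin : m {x | t < g x} ≠ ⊤) :
    Tendsto (fun n : ℕ => ∫⁻ x, ENNReal.ofReal
      |ramp (n + 1) t (g x) - {x | t < g x}.indicator (fun _ => 1) x| ∂m) atTop (𝓝 0) := by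
  have hc : Tendsto (fun n : ℕ => t + ((n : ℝ) + 1)⁻¹) atTop (𝓝[>] t) := by
    refine tendsto_nhdsWithin_of_tendsto_nhds_of_eventually_within _ ?_
      (Eventually.of_forall fun n => lt_add_of_pos_right t (by positivity))
    simpa using (tendsto_const_nhds (x := t)).add tendsto_one_div_add_atTop_nhds_zero_nat
  refine tendsto_of_tendsto_of_tendsto_of_le_of_le tendsto_const_nhds
    ((tendsto_measure_preimage_Ioo hg hfin).comp hc) (fun _ => zero_le) fun n => ?_
  calc ∫⁻ x, ENNReal.ofReal |ramp (n + 1) t (g x) - {x | t < g x}.indicator (fun _ => 1) x| ∂m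
      ≤ ∫⁻ x, (g ⁻¹' Ioo t (t + ((n : ℝ) + 1)⁻¹)).indicator 1 x ∂m :=
        lintegral_mono fun x => ofReal_abs_ramp_sub_indicator_le n.cast_add_one_pos
    _ = m (g ⁻¹' Ioo t (t + ((n : ℝ) + 1)⁻¹)) :=
        lintegral_indicator_one (hg measurableSet_Ioo)

theorem measurable_indicator_preimage_Icc (hg : Measurable g) {F : X → ℝ≥0∞} (hF : Measurable F)
    (w : ℝ) : Measurable fun p : ℝ × X => (g ⁻¹' Icc p.1 (p.1 + w)).indicator F p.2 :=
  (hF.comp measurable_snd).indicator <|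
    (measurableSet_le measurable_fst (hg.comp measurable_snd)).inter
      (measurableSet_le (hg.comp measurable_snd) (measurable_fst.add_const w))

theorem lintegral_lintegral_indicator_preimage_Icc [SFinite m] (hg : Measurable g)
    {S : X → ℝ≥0∞} (hS : Measurable S) {c : ℝ} (hc : 0 < c) :
    ∫⁻ t, ∫⁻ x, (g ⁻¹' Icc t (t + c⁻¹)).indicator (fun y => ENNReal.ofReal c * S y) x ∂m =
      ∫⁻ x, S x ∂m := by
  rw [lintegral_lintegral_swap
    (measurable_indicator_preimage_Icc hg (measurable_const.mul hS) _).aemeasurable]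
  refine lintegral_congr fun x => ?_
  have hband : (fun t => (g ⁻¹' Icc t (t + c⁻¹)).indicator (fun y => ENNReal.ofReal c * S y) x) =
      (Icc (g x - c⁻¹) (g x)).indicator fun _ => ENNReal.ofReal c * S x := by
    ext t
    have hmem : g x ∈ Icc t (t + c⁻¹) ↔ t ∈ Icc (g x - c⁻¹) (g x) := by
      simp only [mem_Icc]; constructor <;> rintro ⟨h1, h2⟩ <;> constructor <;> linarith
    simp only [indicator, mem_preimage, hmem]
  rw [hband, lintegral_indicator_const measurableSet_Icc, Real.volume_Icc, _root_.sub_sub_cancel,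
    mul_right_comm, ← ENNReal.ofReal_mul hc.le, mul_inv_cancel₀ hc.ne', ENNReal.ofReal_one, one_mul]

theorem lintegral_ofReal_abs_rpow_ne_zero (hf : Measurable f) (hf0 : ¬ f =ᵐ[m] 0) (hq : 0 < q) :
    ∫⁻ x, ENNReal.ofReal |f x| ^ q ∂m ≠ 0 := by
  rw [Ne, lintegral_eq_zero_iff (hf.abs.ennreal_ofReal.pow_const q)]
  refine fun h => hf0 (h.mono fun x hx => ?_)
  simpa [ENNReal.rpow_eq_zero_iff_of_pos hq] using hx

theorem lintegral_ofReal_abs_rpow_ne_top (hf : Measurable f) {M : ℝ} (hM : ∀ x, |f x| ≤ M)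
    (hsupp : m (Function.support f) ≠ ⊤) (hq : 0 < q) :
    ∫⁻ x, ENNReal.ofReal |f x| ^ q ∂m ≠ ⊤ := by
  refine ne_top_of_le_ne_top ?_ (lintegral_mono (g := (Function.support f).indicator
    fun _ => ENNReal.ofReal M ^ q) fun x => ?_)
  · rw [lintegral_indicator_const (measurableSet_support hf)]
    exact ENNReal.mul_ne_top (ENNReal.rpow_ne_top_of_nonneg hq.le ofReal_ne_top) hsupp
  · by_cases hx : f x = 0
    · simp [hx, ENNReal.zero_rpow_of_pos hq]
    · rw [indicator_of_mem hx]
      gcongr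
      exact hM x

theorem lintegral_rpow_sub_one_mul_le (μ : Measure X) (hq : 1 < q) {u v : X → ℝ≥0∞}
    (hu : AEMeasurable u μ) (hv : AEMeasurable v μ) :
    ∫⁻ a, u a ^ (q - 1) * v a ∂μ ≤
      (∫⁻ a, u a ^ q ∂μ) ^ (1 - 1 / q) * (∫⁻ a, v a ^ q ∂μ) ^ (1 / q) := by
  have hq' : q - 1 ≠ 0 := sub_ne_zero.2 hq.ne'
  have hexp : (q - 1) * q.conjExponent = q := by
    rw [Real.conjExponent, mul_div_cancel₀ _ hq']
  have hinv : 1 / q.conjExponent = 1 - 1 / q := by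
    rw [Real.conjExponent, one_div_div]; field_simp
  simpa only [Pi.mul_apply, ← ENNReal.rpow_mul, hexp, hinv] using
    ENNReal.lintegral_mul_le_Lp_mul_Lq μ (Real.HolderConjugate.conjExponent hq).symm
      (hu.pow_const (q - 1)) hv

end Lebesgue

section Cheeger

variable {X : Type*} [MetricSpace X] [MeasurableSpace X] {m : Measure X} {g : X → ℝ} {t : ℝ}

theorem cheegerInf_mul_le_perimeter {A : Set X} (hA : MeasurableSet A) (hfin : m A ≠ ⊤) :
    cheegerInf m * m A ≤ perimeter m A := by
  rcases eq_or_ne (m A) 0 with h0 | h0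
  · simp [h0]
  have h : cheegerInf m ≤ perimeter m A / m A :=
    sInf_le ⟨A, hA, pos_iff_ne_zero.2 h0, hfin.lt_top, rfl⟩
  calc cheegerInf m * m A ≤ perimeter m A / m A * m A := mul_le_mul_left h _
    _ = perimeter m A := ENNReal.div_mul_cancel h0 hfin

theorem cheegerInf_mul_measure_lt_le [OpensMeasurableSpace X] {K : ℝ≥0} (hg : LipschitzWith K g)
    (hfin : m {x | t < g x} ≠ ⊤) :
    cheegerInf m * m {x | t < g x} ≤ liminf (fun n : ℕ => ∫⁻ x,
      (g ⁻¹' Icc t (t + ((n : ℝ) + 1)⁻¹)).indicator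
        (fun y => ENNReal.ofReal (n + 1) * eLipSlope g y) x ∂m) atTop := by
  have hramp : ∀ n : ℕ, LipschitzWith _ (ramp (n + 1) t ∘ g) := fun n =>
    (lipschitzWith_ramp n.cast_add_one_pos.le t).comp hg
  have hgm : Measurable g := hg.continuous.measurable
  calc cheegerInf m * m {x | t < g x} ≤ perimeter m {x | t < g x} :=
        cheegerInf_mul_le_perimeter (measurableSet_lt measurable_const hgm) hfin
    _ ≤ liminf (fun n : ℕ => ∫⁻ x, ENNReal.ofReal (lipSlope (ramp (n + 1) t ∘ g) x) ∂m) atTop :=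
        sInf_le ⟨fun n => ramp (n + 1) t ∘ g, fun n => (hramp n).lipLoc,
          tendsto_lintegral_ramp_sub_indicator hgm hfin, rfl⟩
    _ ≤ _ := liminf_le_liminf (Eventually.of_forall fun n => lintegral_mono fun x => by
        rw [ofReal_lipSlope (hramp n)]
        exact eLipSlope_ramp_comp_le n.cast_add_one_pos hg.continuous x)

theorem cheegerInf_mul_lintegral_le [OpensMeasurableSpace X] [SFinite m] {K : ℝ≥0}
    (hg : LipschitzWith K g) (hg0 : 0 ≤ g) (hfin : m (Function.support g) ≠ ⊤) :
    cheegerInf m * ∫⁻ x, ENNReal.ofReal (g x) ∂m ≤ ∫⁻ x, eLipSlope g x ∂m := by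
  set F : ℕ → ℝ → X → ℝ≥0∞ := fun n t => (g ⁻¹' Icc t (t + ((n : ℝ) + 1)⁻¹)).indicator
    fun y => ENNReal.ofReal (n + 1) * eLipSlope g y
  have hgm : Measurable g := hg.continuous.measurable
  have hS : Measurable (eLipSlope g) := measurable_eLipSlope hg.continuous
  calc cheegerInf m * ∫⁻ x, ENNReal.ofReal (g x) ∂m
      = cheegerInf m * ∫⁻ t in Ioi 0, m {x | t < g x} := by
        rw [lintegral_eq_lintegral_meas_lt m (ae_of_all _ hg0) hgm.aemeasurable]
    _ ≤ ∫⁻ t in Ioi 0, cheegerInf m * m {x | t < g x} := lintegral_const_mul_le _ _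
    _ ≤ ∫⁻ t in Ioi 0, liminf (fun n => ∫⁻ x, F n t x ∂m) atTop :=
        setLIntegral_mono' measurableSet_Ioi fun t ht => cheegerInf_mul_measure_lt_le hg <|
          ne_top_of_le_ne_top hfin <| measure_mono fun x hx => (ht.trans hx).ne'
    _ ≤ liminf (fun n => ∫⁻ t in Ioi 0, ∫⁻ x, F n t x ∂m) atTop :=
        lintegral_liminf_le fun n =>
          (measurable_indicator_preimage_Icc hgm (measurable_const.mul hS) _).lintegral_prod_right'
    _ ≤ liminf (fun n => ∫⁻ t, ∫⁻ x, F n t x ∂m) atTop :=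
        liminf_le_liminf (Eventually.of_forall fun n => setLIntegral_le_lintegral _ _)
    _ = ∫⁻ x, eLipSlope g x ∂m := by
        simp only [F, lintegral_lintegral_indicator_preimage_Icc hgm hS (Nat.cast_add_one_pos _),
          liminf_const]

theorem sigmaFinite_of_isBounded_lt_top (hbdd : ∀ s : Set X, Bornology.IsBounded s → m s < ⊤) :
    SigmaFinite m := by
  rcases isEmpty_or_nonempty X with _ | ⟨⟨x₀⟩⟩
  · rw [m.eq_zero_of_isEmpty]; infer_instance
  · exact ⟨⟨⟨fun n => closedBall x₀ n, fun _ => trivial, fun _ => hbdd _ isBounded_closedBall,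
      iUnion_closedBall_nat x₀⟩⟩⟩

end Cheeger

theorem cheeger_ineq_infinite_general {X : Type*} [MetricSpace X] [MeasurableSpace X] [BorelSpace X]
    (m : Measure X)
    (hbdd : ∀ s : Set X, Bornology.IsBounded s → m s < ⊤)
    (q : ℝ) (hq : 1 < q) :
    (cheegerInf m / ENNReal.ofReal q) ^ q ≤ lambdaZeroP m q := by
  refine le_sInf ?_
  rintro _ ⟨f, ⟨⟨K, hf⟩, hsupp⟩, hf0, rfl⟩
  have : SigmaFinite m := sigmaFinite_of_isBounded_lt_top hbdd
  have hq0 : 0 < q := zero_lt_one.trans hq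
  have hfm : Measurable f := hf.continuous.measurable
  obtain ⟨M, hM⟩ := hf.exists_abs_le_of_isBounded_support hsupp
  obtain ⟨K', hg⟩ := hf.exists_lipschitzWith_abs_rpow hM hq.le
  have hsuppq : Function.support (fun x => |f x| ^ q) ⊆ Function.support f :=
    Function.support_subset_iff'.2 fun x hx => by simp [Function.notMem_support.1 hx, hq0.ne']
  have hcoarea := cheegerInf_mul_lintegral_le hg (fun x => by positivity)
    (ne_top_of_le_ne_top (hbdd _ hsupp).ne (measure_mono hsuppq)) (m := m)
  simp only [← ENNReal.ofReal_rpow_of_nonneg (abs_nonneg _) hq0.le] at hcoarea ⊢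
  simp only [← ENNReal.ofReal_rpow_of_nonneg (lipSlope_nonneg hf _) hq0.le, ofReal_lipSlope hf]
  refine ENNReal.div_rpow_le_div_of_mul_le hq0 (lintegral_ofReal_abs_rpow_ne_zero hfm hf0 hq0)
    (lintegral_ofReal_abs_rpow_ne_top hfm hM (hbdd _ hsupp).ne hq0) (hcoarea.trans ?_)
  calc ∫⁻ x, eLipSlope (fun y => |f y| ^ q) x ∂m
      ≤ ∫⁻ x, ENNReal.ofReal q * (ENNReal.ofReal |f x| ^ (q - 1) * eLipSlope f x) ∂m :=
        lintegral_mono fun x => (eLipSlope_abs_rpow_le hf hq.le x).trans_eq (mul_assoc _ _ _)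
    _ = ENNReal.ofReal q * ∫⁻ x, ENNReal.ofReal |f x| ^ (q - 1) * eLipSlope f x ∂m :=
        lintegral_const_mul' _ _ ofReal_ne_top
    _ ≤ _ := by
        gcongr
        exact lintegral_rpow_sub_one_mul_le m hq hfm.abs.ennreal_ofReal.aemeasurable
          (measurable_eLipSlope hf.continuous).aemeasurable

/-- `q`-Cheeger inequality (infinite measure case): for a complete separable metric measure
space with `m(X) = ∞` and `m` finite on bounded sets, for every `q ∈ (1,∞)` one has
`λ_{0,q} ≥ (h(X)/q)^q`; in particular (`q = 2`) Cheeger's inequality `λ_{0,2} ≥ h(X)²/4`. -/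
theorem cheeger_ineq_infinite {X : Type*} [MetricSpace X] [CompleteSpace X]
    [TopologicalSpace.SeparableSpace X] [MeasurableSpace X] [BorelSpace X]
    (m : Measure X)
    (hbdd : ∀ s : Set X, Bornology.IsBounded s → m s < ⊤)
    (hinf : m Set.univ = ⊤)
    (q : ℝ) (hq : 1 < q) :
    (cheegerInf m / ENNReal.ofReal q) ^ q ≤ lambdaZeroP m q :=
  cheeger_ineq_infinite_general m hbdd q hq
end

section
/- Let (X,d) be a complete separable metric space and m a nonnegative Borel measure on X, finite on bounded sets, with m(X) = 1. Let K > 0 and suppose the Gaussian isoperimetric inequality Per(E) ≥ I_K(m(E)) holds for every Borel set E ⊆ X. Then (X,d,m) admits a superlinear isoperimetric profile, i.e. there exists ω : (0,∞) → (0,1/2] such that for every ε > 0 and every Borel set E ⊆ X, m(E) ≤ ω(ε) implies m(E) ≤ ε·Per(E). -/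
open MeasureTheory Filter Topology ENNReal

/-- The Gaussian cumulative distribution function `Φ_K`. -/
noncomputable def PhiK (K : ℝ) (x : ℝ) : ℝ :=
  Real.sqrt (K / (2 * Real.pi)) * ∫ t in Set.Iic x, Real.exp (-K * t ^ 2 / 2)

/-- The Gaussian density `φ_K := Φ_K′`. -/
noncomputable def phiK (K : ℝ) : ℝ → ℝ := deriv (PhiK K)

/-- The Gaussian isoperimetric profile `I_K := φ_K ∘ Φ_K^{-1}`. -/
noncomputable def gaussianIsopProfile (K : ℝ) (p : ℝ) : ℝ :=
  phiK K (Function.invFun (PhiK K) p)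

/-! For `x < 0` the Mills ratio bound `Φ_K(x) ≤ φ_K(x) / (K |x|)` holds, obtained by inserting
the factor `t / x ≥ 1` under the integral defining `Φ_K(x)`. Writing `p = Φ_K(z)`, the Gaussian
profile therefore satisfies `p ≤ I_K(p) / (K |z|)`, and `K |z| ≥ 1/ε` as soon as
`p ≤ Φ_K(-1/(Kε))`. So `ω(ε) := min (Φ_K(-1/(Kε))) (1/2)` turns the Gaussian isoperimetric
inequality into `m(E) ≤ ε Per(E)`. -/

open Set

noncomputable def gaussKernel (K t : ℝ) : ℝ := Real.exp (-K * t ^ 2 / 2)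

section Gaussian

variable {K : ℝ}

lemma gaussKernel_eq (K t : ℝ) : gaussKernel K t = Real.exp (-(K / 2) * t ^ 2) := by
  unfold gaussKernel; ring_nf

lemma gaussKernel_pos (K t : ℝ) : 0 < gaussKernel K t := Real.exp_pos _

lemma continuous_gaussKernel (K : ℝ) : Continuous (gaussKernel K) := by
  unfold gaussKernel; fun_prop

lemma hasDerivAt_gaussKernel (K t : ℝ) :
    HasDerivAt (gaussKernel K) (-K * t * gaussKernel K t) t := by
  have h := ((hasDerivAt_pow 2 t).const_mul (-K)).div_const 2
  exact ((Real.hasDerivAt_exp _).comp t h).congr_deriv (by unfold gaussKernel; push_cast; ring)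

lemma tendsto_gaussKernel_atBot (hK : 0 < K) : Tendsto (gaussKernel K) atBot (𝓝 0) := by
  have h : Tendsto (fun t : ℝ => -(K / 2) * t ^ 2) atBot atBot :=
    (tendsto_pow_atTop two_ne_zero |>.comp tendsto_neg_atBot_atTop
      |>.congr fun t => by simp) |>.const_mul_atTop_of_neg (by linarith)
  exact (Real.tendsto_exp_atBot.comp h).congr fun t => (gaussKernel_eq K t).symm

lemma integrable_gaussKernel (hK : 0 < K) : Integrable (gaussKernel K) :=
  (integrable_exp_neg_mul_sq (by linarith : 0 < K / 2)).congr
    (Eventually.of_forall fun t => (gaussKernel_eq K t).symm)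

lemma integrable_mul_gaussKernel (hK : 0 < K) : Integrable fun t => t * gaussKernel K t :=
  (integrable_mul_exp_neg_mul_sq (by linarith : 0 < K / 2)).congr
    (Eventually.of_forall fun t => by simp only [gaussKernel_eq])

lemma integral_Iic_mul_gaussKernel (hK : 0 < K) (x : ℝ) :
    ∫ t in Iic x, t * gaussKernel K t = -gaussKernel K x / K := by
  have hderiv : ∀ t ∈ Iic x, HasDerivAt (fun s => -gaussKernel K s / K) (t * gaussKernel K t) t :=
    fun t _ => ((hasDerivAt_gaussKernel K t).neg.div_const K).congr_deriv (by field_simp)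
  have hlim : Tendsto (fun s => -gaussKernel K s / K) atBot (𝓝 0) := by
    simpa using (tendsto_gaussKernel_atBot hK).neg.div_const K
  simpa using integral_Iic_of_hasDerivAt_of_tendsto' hderiv
    (integrable_mul_gaussKernel hK).integrableOn hlim

lemma integral_Iic_gaussKernel_le (hK : 0 < K) {x : ℝ} (hx : x < 0) :
    ∫ t in Iic x, gaussKernel K t ≤ gaussKernel K x / (K * -x) := by
  have hle : ∫ t in Iic x, gaussKernel K t ≤ ∫ t in Iic x, x⁻¹ * (t * gaussKernel K t) := by
    refine setIntegral_mono_on (integrable_gaussKernel hK).integrableOn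
      ((integrable_mul_gaussKernel hK).const_mul _).integrableOn measurableSet_Iic fun t ht => ?_
    have h1 : 1 ≤ t / x := by rw [le_div_iff_of_neg hx]; simpa using ht
    calc gaussKernel K t ≤ t / x * gaussKernel K t :=
          le_mul_of_one_le_left (gaussKernel_pos K t).le h1
      _ = x⁻¹ * (t * gaussKernel K t) := by ring
  calc ∫ t in Iic x, gaussKernel K t ≤ x⁻¹ * (-gaussKernel K x / K) := by
        rwa [integral_const_mul, integral_Iic_mul_gaussKernel hK] at hle
    _ = gaussKernel K x / (K * -x) := by field_simp

lemma PhiK_eq (K x : ℝ) :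
    PhiK K x = √(K / (2 * Real.pi)) * ∫ t in Iic x, gaussKernel K t := rfl

lemma hasDerivAt_PhiK (hK : 0 < K) (x : ℝ) :
    HasDerivAt (PhiK K) (√(K / (2 * Real.pi)) * gaussKernel K x) x := by
  have hint := integrable_gaussKernel hK
  have hsplit : ∀ y : ℝ, ∫ t in Iic y, gaussKernel K t
      = (∫ t in Iic (0 : ℝ), gaussKernel K t) + ∫ t in (0 : ℝ)..y, gaussKernel K t := fun y => by
    rw [← intervalIntegral.integral_Iic_sub_Iic hint.integrableOn hint.integrableOn]; ring
  have hFTC := intervalIntegral.integral_hasDerivAt_right (a := 0) (b := x) hint.intervalIntegrable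
    ((continuous_gaussKernel K).stronglyMeasurableAtFilter _ _)
    (continuous_gaussKernel K).continuousAt
  exact ((hFTC.const_add _).congr_of_eventuallyEq (Eventually.of_forall hsplit)).const_mul _

lemma phiK_eq (hK : 0 < K) (x : ℝ) : phiK K x = √(K / (2 * Real.pi)) * gaussKernel K x :=
  (hasDerivAt_PhiK hK x).deriv

lemma continuous_PhiK (hK : 0 < K) : Continuous (PhiK K) :=
  continuous_iff_continuousAt.mpr fun x => (hasDerivAt_PhiK hK x).continuousAt

lemma strictMono_PhiK (hK : 0 < K) : StrictMono (PhiK K) :=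
  strictMono_of_deriv_pos fun x => by
    rw [(hasDerivAt_PhiK hK x).deriv]
    exact mul_pos (Real.sqrt_pos.mpr (by positivity)) (gaussKernel_pos K x)

lemma tendsto_PhiK_atBot (K : ℝ) : Tendsto (PhiK K) atBot (𝓝 0) := by
  have h := (tendsto_integral_Iic_zero (f := gaussKernel K) (μ := volume) tendsto_id).const_mul
    √(K / (2 * Real.pi))
  rwa [mul_zero] at h

lemma PhiK_pos (hK : 0 < K) (x : ℝ) : 0 < PhiK K x :=
  ((strictMono_PhiK hK).monotone.le_of_tendsto (tendsto_PhiK_atBot K) (x - 1)).trans_lt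
    (strictMono_PhiK hK (by linarith))

lemma PhiK_le_phiK_div (hK : 0 < K) {x : ℝ} (hx : x < 0) :
    PhiK K x ≤ phiK K x / (K * -x) := by
  rw [PhiK_eq, phiK_eq hK, mul_div_assoc]
  exact mul_le_mul_of_nonneg_left (integral_Iic_gaussKernel_le hK hx) (Real.sqrt_nonneg _)

lemma PhiK_invFun_PhiK {p a : ℝ} (hK : 0 < K) (hp : 0 < p) (hpa : p ≤ PhiK K a) :
    PhiK K (Function.invFun (PhiK K) p) = p := by
  obtain ⟨y, hya, hyp⟩ :=
    ((eventually_le_atBot a).and ((tendsto_PhiK_atBot K).eventually (gt_mem_nhds hp))).exists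
  obtain ⟨x, -, hx⟩ :=
    intermediate_value_Icc hya (continuous_PhiK hK).continuousOn ⟨hyp.le, hpa⟩
  exact Function.invFun_eq ⟨x, hx⟩

lemma le_mul_gaussianIsopProfile (hK : 0 < K) {ε p : ℝ} (hε : 0 < ε) (hp : 0 < p)
    (hpε : p ≤ PhiK K (-(K * ε)⁻¹)) : p ≤ ε * gaussianIsopProfile K p := by
  set z := Function.invFun (PhiK K) p
  have hz : PhiK K z = p := PhiK_invFun_PhiK hK hp hpε
  have hzε : z ≤ -(K * ε)⁻¹ := (strictMono_PhiK hK).le_iff_le.mp (hz ▸ hpε)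
  have hz0 : z < 0 := hzε.trans_lt (neg_neg_of_pos (by positivity))
  have hKz : 1 ≤ ε * (K * -z) := by
    have := mul_le_mul_of_nonneg_left (le_neg_of_le_neg hzε) (by positivity : 0 ≤ K * ε)
    rw [mul_inv_cancel₀ (by positivity)] at this
    linarith
  have hphi : 0 ≤ phiK K z := by
    rw [phiK_eq hK]; exact mul_nonneg (Real.sqrt_nonneg _) (gaussKernel_pos K z).le
  calc p = PhiK K z := hz.symm
    _ ≤ phiK K z / (K * -z) := PhiK_le_phiK_div hK hz0
    _ ≤ ε * phiK K z := by
      rw [div_le_iff₀ (mul_pos hK (neg_pos.2 hz0))]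
      calc phiK K z ≤ phiK K z * (ε * (K * -z)) := le_mul_of_one_le_right hphi hKz
        _ = ε * phiK K z * (K * -z) := by ring
    _ = ε * gaussianIsopProfile K p := rfl

end Gaussian

theorem superlinear_profile_of_gaussian_isoperimetry_general
    {X : Type*} [MetricSpace X] [MeasurableSpace X]
    (m : Measure X)
    (K : ℝ) (hK : 0 < K)
    (hGauss : ∀ E : Set X, MeasurableSet E →
      ENNReal.ofReal (gaussianIsopProfile K (m E).toReal) ≤ perimeter m E) :
    ∃ ω : ℝ → ℝ, (∀ ε : ℝ, 0 < ε → 0 < ω ε ∧ ω ε ≤ 1 / 2) ∧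
      ∀ ε : ℝ, 0 < ε → ∀ E : Set X, MeasurableSet E →
        m E ≤ ENNReal.ofReal (ω ε) → m E ≤ ENNReal.ofReal ε * perimeter m E := by
  have hω : ∀ ε, 0 < min (PhiK K (-(K * ε)⁻¹)) (1 / 2) := fun ε =>
    lt_min (PhiK_pos hK _) one_half_pos
  refine ⟨fun ε => min (PhiK K (-(K * ε)⁻¹)) (1 / 2),
    fun ε _ => ⟨hω ε, min_le_right _ _⟩, fun ε hε E hE hmE => ?_⟩
  rcases eq_or_ne (m E) 0 with h0 | h0
  · simp [h0]
  have hfin : m E ≠ ⊤ := ne_top_of_le_ne_top ofReal_ne_top hmE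
  have hp : (m E).toReal ≤ PhiK K (-(K * ε)⁻¹) :=
    (toReal_le_of_le_ofReal (hω ε).le hmE).trans (min_le_left _ _)
  calc m E = ENNReal.ofReal (m E).toReal := (ofReal_toReal hfin).symm
    _ ≤ ENNReal.ofReal (ε * gaussianIsopProfile K (m E).toReal) :=
      ofReal_le_ofReal (le_mul_gaussianIsopProfile hK hε (toReal_pos h0 hfin) hp)
    _ = ENNReal.ofReal ε * ENNReal.ofReal (gaussianIsopProfile K (m E).toReal) :=
      ofReal_mul hε.le
    _ ≤ ENNReal.ofReal ε * perimeter m E := by gcongr; exact hGauss E hE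

/-- If `(X,d,m)` is a complete separable metric measure space with `m(X) = 1`, `m` finite on
bounded sets, `K > 0`, and the Gaussian isoperimetric inequality `Per(E) ≥ I_K(m(E))` holds
for every Borel set `E`, then `(X,d,m)` admits a superlinear isoperimetric profile. -/
theorem superlinear_profile_of_gaussian_isoperimetry
    {X : Type*} [MetricSpace X] [CompleteSpace X]
    [TopologicalSpace.SeparableSpace X] [MeasurableSpace X] [BorelSpace X]
    (m : Measure X)
    (hbdd : ∀ s : Set X, Bornology.IsBounded s → m s < ⊤)
    (hprob : m Set.univ = 1)
    (K : ℝ) (hK : 0 < K)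
    (hGauss : ∀ E : Set X, MeasurableSet E →
      ENNReal.ofReal (gaussianIsopProfile K (m E).toReal) ≤ perimeter m E) :
    ∃ ω : ℝ → ℝ, (∀ ε : ℝ, 0 < ε → 0 < ω ε ∧ ω ε ≤ 1 / 2) ∧
      ∀ ε : ℝ, 0 < ε → ∀ E : Set X, MeasurableSet E →
        m E ≤ ENNReal.ofReal (ω ε) → m E ≤ ENNReal.ofReal ε * perimeter m E :=
  superlinear_profile_of_gaussian_isoperimetry_general m K hK hGauss
end
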